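/- In the DGA A, the homology class ā₀·c̄ belongs to the indeterminacy of the threefold bracket ⟨ā₀,ā₁,ā₂⟩: both a₁₂ and a₁₂ + c satisfy d(x) = a₁a₂, and the corresponding bracket representatives a₀a₁₂ + a₀₁a₂ and a₀(a₁₂+c) + a₀₁a₂ differ in homology by the class of a₀c, which is a nonzero cycle that is not a boundary. -/

import Mathlib

open MvPolynomial

/-- The polynomial algebra over F₂ on generators
a₀, a₁, a₂, a₃, a₀₁, a₁₂, a₂₃, c, a₀₂, a₁₃ (indices 0,…,9). -/
abbrev P : Type := MvPolynomial (Fin 10) (ZMod 2)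

/-- Values of the differential of A on the generators:
d(a₀)=d(a₁)=d(a₂)=d(a₃)=d(c)=0, d(a₀₁)=a₀a₁, d(a₁₂)=a₁a₂, d(a₂₃)=a₂a₃,
d(a₀₂)=a₀a₁₂+a₀₁a₂, d(a₁₃)=a₁a₂₃+a₁₂a₃. -/
noncomputable def dvalA : Fin 10 → P :=
  ![0, 0, 0, 0, X 0 * X 1, X 1 * X 2, X 2 * X 3, 0,
    X 0 * X 5 + X 4 * X 2, X 1 * X 6 + X 5 * X 3]

/-- The differential of A: the unique F₂-linear derivation with the values
`dvalA` on the generators (Leibniz rule holds automatically). -/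
noncomputable def dA : P → P := fun p => mkDerivation (ZMod 2) dvalA p

/-!
The augmentation `A → F₂` sending `a₀` and `c` to `1` and every other generator to `0` kills
the differential of each generator (every monomial of `d(a_{ij})` contains a generator other than
`a₀` and `c`), hence, being multiplicative, kills every boundary. It sends `a₀c` to `1`, so `a₀c`
is neither zero nor a boundary.
-/

theorem MvPolynomial.aeval_derivation_eq_zero {σ R B : Type*} [CommRing R] [CommRing B]
    [Algebra R B] (D : Derivation R (MvPolynomial σ R) (MvPolynomial σ R)) (x : σ → B)
    (h : ∀ i, aeval x (D (X i)) = 0) (p : MvPolynomial σ R) : aeval x (D p) = 0 := by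
  induction p using MvPolynomial.induction_on with
  | C a => rw [← algebraMap_eq, D.map_algebraMap, map_zero]
  | add p q hp hq => rw [map_add, map_add, hp, hq, add_zero]
  | mul_X p i hp => simp [D.leibniz, h, hp]

noncomputable def augA : P →ₐ[ZMod 2] ZMod 2 :=
  aeval fun i => if i = 0 ∨ i = 7 then 1 else 0

lemma augA_dA (p : P) : augA (dA p) = 0 :=
  aeval_derivation_eq_zero _ _ (fun i => by fin_cases i <;> simp [mkDerivation_X, dvalA]) p

lemma augA_X0_mul_X7 : augA (X 0 * X 7) = 1 := by simp [augA]

/-- In A, both a₁₂ and a₁₂ + c are admissible choices, and the corresponding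
representatives of ⟨ā₀,ā₁,ā₂⟩ differ by a₀c, which is a nonzero cycle that is
not a boundary; hence ā₀c̄ lies in the indeterminacy of ⟨ā₀,ā₁,ā₂⟩. -/
theorem stmt_14 :
    dA (X 5) = X 1 * X 2 ∧
    dA (X 5 + X 7) = X 1 * X 2 ∧
    ((X 0 * (X 5 + X 7) + X 4 * X 2) + (X 0 * X 5 + X 4 * X 2) : P) = X 0 * X 7 ∧
    dA (X 0 * X 7) = 0 ∧
    (X 0 * X 7 : P) ≠ 0 ∧
    ¬ ∃ u : P, dA u = X 0 * X 7 := by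
  refine ⟨mkDerivation_X _ _ _, ?_, ?_, ?_, ?_, ?_⟩
  · simp [dA, mkDerivation_X, dvalA]
  · linear_combination (X 0 * X 5 + X 4 * X 2) * (CharTwo.two_eq_zero : (2 : P) = 0)
  · simp [dA, Derivation.leibniz, mkDerivation_X, dvalA]
  · intro h
    simpa [h] using augA_X0_mul_X7
  · rintro ⟨u, hu⟩
    simpa [hu, augA_X0_mul_X7] using augA_dA u
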